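/- arXiv:1407.7774 — 4 statements merged into one kernel-verified Lean document; each statement's English description precedes it below -/
import Mathlib

section
/- For every integer r ≥ 1, the number of rooted hypermaps with one face and r darts equals r!. That is, the number of orbits of the group H = {τ ∈ Sym_r : τ(1) = 1}, acting by simultaneous conjugation on the set of pairs (f, σ) of permutations of {1,…,r} with f an r-cycle, equals r!. -/
/-- Number of cycles of a permutation, counting fixed points as cycles of length 1
(i.e. the number of orbits). -/
def cyc {r : ℕ} (σ : Equiv.Perm (Fin r)) : ℕ :=
  σ.cycleType.card + (Finset.univ.filter fun x => σ x = x).card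

/-- The equivalence relation on pairs of permutations of {1,…,r} given by simultaneous
conjugation by elements of H = {τ ∈ Sym_r : τ fixes the root element}. -/
def rootedRel (r : ℕ) (hr : 1 ≤ r) : Setoid (Equiv.Perm (Fin r) × Equiv.Perm (Fin r)) where
  r p q := ∃ τ : Equiv.Perm (Fin r), τ ⟨0, hr⟩ = ⟨0, hr⟩ ∧
    q.1 = τ * p.1 * τ⁻¹ ∧ q.2 = τ * p.2 * τ⁻¹
  iseqv := by
    constructor
    · exact fun p => ⟨1, by simp, by simp, by simp⟩
    · rintro p q ⟨τ, h0, h1, h2⟩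
      exact ⟨τ⁻¹, by nth_rewrite 1 [← h0]; exact Equiv.symm_apply_apply τ _,
        by rw [h1]; group, by rw [h2]; group⟩
    · rintro p q s ⟨τ, h0, h1, h2⟩ ⟨τ', h0', h1', h2'⟩
      exact ⟨τ' * τ, by rw [Equiv.Perm.mul_apply, h0, h0'],
        by rw [h1', h1]; group, by rw [h2', h2]; group⟩

/-! Every one-face permutation `f` is conjugate to the standard `r`-cycle `c = finRotate r`, and
since `c` is transitive the conjugator can be chosen to fix the root. An element fixing the root
and commuting with `c` fixes the whole `c`-orbit of the root, so it is the identity. Hence every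
orbit contains exactly one pair of the form `(c, σ)`, and the orbits are in bijection with
`Sym_r`. -/

open Equiv Equiv.Perm Function

theorem Nat.Partition.parts_eq_singleton_of_card_parts_eq_one {n : ℕ} {p : n.Partition}
    (hp : Multiset.card p.parts = 1) : p.parts = {n} := by
  obtain ⟨a, ha⟩ := Multiset.card_eq_one.mp hp
  have hsum := p.parts_sum
  rw [ha, Multiset.sum_singleton] at hsum
  rw [ha, hsum]

namespace Equiv.Perm

variable {α : Type*}

theorem eq_one_of_commute_of_forall_sameCycle {c τ : Perm α} {a : α}
    (hc : ∀ x, c.SameCycle a x) (hcomm : Commute τ c) (ha : τ a = a) : τ = 1 := by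
  ext x
  obtain ⟨k, rfl⟩ := hc x
  rw [one_apply, ← mul_apply, (hcomm.zpow_right k).eq, mul_apply, ha]

theorem exists_apply_eq_and_conj_eq_of_forall_sameCycle {c f : Perm α} {a : α}
    (hc : ∀ x, c.SameCycle a x) (hcf : IsConj c f) (b : α) :
    ∃ g : Perm α, g a = b ∧ g * c * g⁻¹ = f := by
  obtain ⟨g, rfl⟩ := isConj_iff.mp hcf
  obtain ⟨k, hk⟩ := hc (g⁻¹ b)
  refine ⟨g * c ^ k, by simp [mul_apply, hk], ?_⟩
  rw [mul_inv_rev, mul_assoc g, ← (Commute.self_zpow c k).eq]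
  group

end Equiv.Perm

theorem sameCycle_finRotate {n : ℕ} (i j : Fin n) : (finRotate n).SameCycle i j := by
  have := i.neZero
  refine ⟨(j - i : Fin n).val, ?_⟩
  rw [zpow_natCast, coe_pow, ← finCycle_eq_finRotate_iterate, finCycle_apply, add_sub_cancel]

theorem cyc_eq_card_parts_partition {r : ℕ} (σ : Perm (Fin r)) :
    cyc σ = Multiset.card σ.partition.parts := by
  have hfix : (Finset.univ.filter fun x => σ x = x).card = r - σ.support.card := by
    have := Finset.card_filter_add_card_filter_not (s := Finset.univ) (fun x => σ x = x)
    rw [Finset.card_univ, Fintype.card_fin] at this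
    simp only [Perm.support, ne_eq]
    omega
  simp [cyc, parts_partition, hfix]

theorem isConj_of_cyc_eq_one {r : ℕ} {f g : Perm (Fin r)} (hf : cyc f = 1) (hg : cyc g = 1) :
    IsConj f g := by
  rw [cyc_eq_card_parts_partition] at hf hg
  rw [partition_eq_of_isConj, Nat.Partition.ext_iff,
    Nat.Partition.parts_eq_singleton_of_card_parts_eq_one hf,
    Nat.Partition.parts_eq_singleton_of_card_parts_eq_one hg]

theorem cyc_finRotate {r : ℕ} (hr : 1 ≤ r) : cyc (finRotate r) = 1 := by
  obtain _ | _ | n := r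
  · omega
  · simp [cyc, Subsingleton.elim (finRotate 1) 1]
  · simp [cyc, cycleType_finRotate]

section RootedRel

variable {r : ℕ} (hr : 1 ≤ r)

theorem rootedRel_mk_finRotate_injective :
    Injective fun σ : Perm (Fin r) => Quotient.mk (rootedRel r hr) (finRotate r, σ) := by
  intro σ σ' h
  obtain ⟨τ, hτ0, hτc, hτσ⟩ := Quotient.exact h
  have hcomm : Commute τ (finRotate r) := mul_inv_eq_iff_eq_mul.mp hτc.symm
  obtain rfl := eq_one_of_commute_of_forall_sameCycle (sameCycle_finRotate _) hcomm hτ0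
  simpa using hτσ.symm

theorem exists_rootedRel_mk_finRotate_eq {p : Perm (Fin r) × Perm (Fin r)} (hp : cyc p.1 = 1) :
    ∃ σ, Quotient.mk (rootedRel r hr) (finRotate r, σ) = Quotient.mk (rootedRel r hr) p := by
  obtain ⟨g, hg0, hg⟩ := exists_apply_eq_and_conj_eq_of_forall_sameCycle
    (sameCycle_finRotate ⟨0, hr⟩) (isConj_of_cyc_eq_one (cyc_finRotate hr) hp) ⟨0, hr⟩
  exact ⟨g⁻¹ * p.2 * g, Quotient.sound ⟨g, hg0, hg.symm, by group⟩⟩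

end RootedRel

/-- There are r! rooted hypermaps with one face and r darts: the number of H-orbits
(under simultaneous conjugation by the stabilizer H of the root) of pairs (f, σ) of
permutations of {1,…,r} with f an r-cycle (i.e. `cyc f = 1`) equals r!. -/
theorem one_face_rooted_hypermap_count (r : ℕ) (hr : 1 ≤ r) :
    Nat.card {q : Quotient (rootedRel r hr) //
        ∃ p : Equiv.Perm (Fin r) × Equiv.Perm (Fin r),
          cyc p.1 = 1 ∧ Quotient.mk (rootedRel r hr) p = q} = Nat.factorial r := by
  let Φ : Perm (Fin r) → {q : Quotient (rootedRel r hr) //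
      ∃ p : Perm (Fin r) × Perm (Fin r), cyc p.1 = 1 ∧ Quotient.mk (rootedRel r hr) p = q} :=
    fun σ => ⟨_, (finRotate r, σ), cyc_finRotate hr, rfl⟩
  have hΦ : Bijective Φ := by
    refine ⟨fun σ σ' h => rootedRel_mk_finRotate_injective hr (congrArg Subtype.val h), ?_⟩
    rintro ⟨_, p, hp, rfl⟩
    obtain ⟨σ, hσ⟩ := exists_rootedRel_mk_finRotate_eq hr hp
    exact ⟨σ, Subtype.ext hσ⟩
  rw [← Nat.card_eq_of_bijective Φ hΦ, Nat.card_perm, Nat.card_fin]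
end

section
/- Fix integers m, n and define, for integers r ≥ 1 and k ≥ 0, the rational numbers F(r,k) = ((−1)^k / r!) · C(r−1,k) · ∏_{j=0}^{r−1}(m−k+j) · ∏_{j=0}^{r−1}(n−k+j) and G(r,k) = ((−1)^k / (r+2)!) · C(r,k−1) · ∏_{j=0}^{r}(m−k+j) · ∏_{j=0}^{r}(n−k+j) · Q(r,k), where C denotes the binomial coefficient (equal to 0 when the lower index is negative or exceeds the upper index) and Q(r,k) = k²r − 3kr² − mnr + 2r³ + k² + km + kn − 7kr − 3mn − mr − nr + 7r² − 4k − m − n + 8r + 3. Then for all r ≥ 1 and all k ≥ 0: (r+3)·F(r+2,k) − (2r+3)(m+n)·F(r+1,k) + r·((m−n)² − (r+1)²)·F(r,k) = G(r,k+1) − G(r,k). -/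
/-- F(r,k) = ((−1)^k / r!) · C(r−1,k) · ∏_{j=0}^{r−1}(m−k+j) · ∏_{j=0}^{r−1}(n−k+j). -/
noncomputable def F (m n : ℤ) (r k : ℕ) : ℚ :=
  ((-1 : ℚ) ^ k / (Nat.factorial r : ℚ)) * (Nat.choose (r - 1) k : ℚ) *
    (∏ j ∈ Finset.range r, ((m : ℚ) - (k : ℚ) + (j : ℚ))) *
    (∏ j ∈ Finset.range r, ((n : ℚ) - (k : ℚ) + (j : ℚ)))

/-- The polynomial Q(r,k) appearing in the Zeilberger certificate. -/
def Q (m n : ℤ) (r k : ℕ) : ℚ :=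
  (k : ℚ) ^ 2 * r - 3 * k * (r : ℚ) ^ 2 - (m : ℚ) * n * r + 2 * (r : ℚ) ^ 3 + (k : ℚ) ^ 2 +
    (k : ℚ) * m + (k : ℚ) * n - 7 * (k : ℚ) * r - 3 * (m : ℚ) * n - (m : ℚ) * r - (n : ℚ) * r +
    7 * (r : ℚ) ^ 2 - 4 * (k : ℚ) - (m : ℚ) - (n : ℚ) + 8 * (r : ℚ) + 3

/-- G(r,k) = ((−1)^k / (r+2)!) · C(r,k−1) · ∏_{j=0}^{r}(m−k+j) · ∏_{j=0}^{r}(n−k+j) · Q(r,k),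
where C(r,k−1) is 0 when k−1 is negative, i.e. when k = 0. -/
noncomputable def G (m n : ℤ) (r k : ℕ) : ℚ :=
  ((-1 : ℚ) ^ k / (Nat.factorial (r + 2) : ℚ)) *
    (if k = 0 then (0 : ℚ) else (Nat.choose r (k - 1) : ℚ)) *
    (∏ j ∈ Finset.range (r + 1), ((m : ℚ) - (k : ℚ) + (j : ℚ))) *
    (∏ j ∈ Finset.range (r + 1), ((n : ℚ) - (k : ℚ) + (j : ℚ))) * Q m n r k

/-!
Each of the five terms is a multiple of the hypergeometric term
`(-1)^k C(r+1,k) ∏_{j<r}(m-k+j) ∏_{j<r}(n-k+j) / r!` by a rational function of `r, k, m, n`: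
the binomial coefficients are related by `C(r,k) = C(r+1,k)(r+1-k)/(r+1)`,
`C(r-1,k) = C(r,k)(r-k)/r` and `C(r,k-1) = k C(r+1,k)/(r+1)`, which hold for every `k`,
and the rising products differ by linear factors. Dividing by that term and clearing
denominators leaves a polynomial identity.
-/

open Finset

theorem Nat.cast_choose_eq_choose_succ_mul_div {K : Type*} [Field K] [CharZero K] (n k : ℕ) :
    (n.choose k : K) = (n + 1).choose k * (n + 1 - k) / (n + 1) := by
  rw [eq_div_iff (Nat.cast_add_one_ne_zero n)]
  rcases le_or_gt k (n + 1) with hk | hk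
  · rw [← Nat.cast_add_one, ← Nat.cast_sub hk]
    exact_mod_cast Nat.choose_mul_succ_eq n k
  · simp [Nat.choose_eq_zero_of_lt hk, Nat.choose_eq_zero_of_lt (by omega : n < k)]

theorem Nat.cast_choose_pred_eq_choose_mul_div {K : Type*} [Field K] [CharZero K] {n : ℕ}
    (hn : n ≠ 0) (k : ℕ) : ((n - 1).choose k : K) = n.choose k * (n - k) / n := by
  obtain ⟨n, rfl⟩ := Nat.exists_eq_succ_of_ne_zero hn
  simpa using Nat.cast_choose_eq_choose_succ_mul_div (K := K) n k

theorem Nat.ite_cast_choose_pred_eq_mul_choose_succ_div {K : Type*} [Field K] [CharZero K]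
    (n k : ℕ) :
    (if k = 0 then 0 else (n.choose (k - 1) : K)) = k * (n + 1).choose k / (n + 1) := by
  rw [eq_div_iff (Nat.cast_add_one_ne_zero n)]
  rcases k with _ | k
  · simp
  · have := Nat.add_one_mul_choose_eq n k
    simp only [add_eq_zero, one_ne_zero, and_false, if_false, Nat.add_sub_cancel]
    exact_mod_cast by linarith

theorem Finset.prod_range_succ_sub_succ_add {R : Type*} [CommRing R] (x : R) (k r : ℕ) :
    ∏ j ∈ range (r + 1), (x - ((k + 1 : ℕ) : R) + j) =
      (x - k - 1) * ∏ j ∈ range r, (x - k + j) := by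
  rw [prod_range_succ', mul_comm]
  congr 1
  · push_cast; ring
  · exact prod_congr rfl fun j _ => by push_cast; ring

/-- The Zeilberger certificate identity: for all r ≥ 1 and k ≥ 0,
(r+3)·F(r+2,k) − (2r+3)(m+n)·F(r+1,k) + r((m−n)²−(r+1)²)·F(r,k) = G(r,k+1) − G(r,k). -/
theorem zeilberger_certificate (m n : ℤ) (r : ℕ) (hr : 1 ≤ r) (k : ℕ) :
    ((r : ℚ) + 3) * F m n (r + 2) k -
        (2 * (r : ℚ) + 3) * ((m : ℚ) + (n : ℚ)) * F m n (r + 1) k +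
        (r : ℚ) * (((m : ℚ) - (n : ℚ)) ^ 2 - ((r : ℚ) + 1) ^ 2) * F m n r k =
      G m n r (k + 1) - G m n r k := by
  have hr0 : (r : ℚ) ≠ 0 := by exact_mod_cast (by omega : r ≠ 0)
  simp only [F, G, Q, Nat.add_sub_cancel, Nat.ite_cast_choose_pred_eq_mul_choose_succ_div,
    Nat.cast_choose_pred_eq_choose_mul_div (by omega : r ≠ 0), prod_range_succ_sub_succ_add]
  rw [Nat.cast_choose_eq_choose_succ_mul_div r k]
  simp only [prod_range_succ, Nat.factorial_succ]
  push_cast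
  field_simp
  ring
end

section
/- For all integers r, m, n ≥ 1, the generating function P_r(m,n) = ∑_{σ ∈ Sym_r} m^{cyc(σ)} n^{cyc(ξ_r σ)} is symmetric in m and n: ∑_{σ ∈ Sym_r} m^{cyc(σ)} n^{cyc(ξ_r σ)} = ∑_{σ ∈ Sym_r} n^{cyc(σ)} m^{cyc(ξ_r σ)}. -/
open Equiv Finset

theorem Equiv.Perm.card_filter_apply_eq_self {α : Type*} [Fintype α] [DecidableEq α]
    (σ : Perm α) : #{x | σ x = x} = Fintype.card α - #σ.support := by
  rw [← card_compl, Perm.support, compl_filter]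
  simp only [ne_eq, not_not]

lemma cyc_eq_card_cycleType_add {r : ℕ} (σ : Perm (Fin r)) :
    cyc σ = σ.cycleType.card + (r - #σ.support) := by
  rw [cyc, σ.card_filter_apply_eq_self, Fintype.card_fin]

lemma cyc_inv {r : ℕ} (σ : Perm (Fin r)) : cyc σ⁻¹ = cyc σ := by
  simp only [cyc_eq_card_cycleType_add, Perm.cycleType_inv, Perm.support_inv]

lemma cyc_conj {r : ℕ} (τ σ : Perm (Fin r)) : cyc (τ * σ * τ⁻¹) = cyc σ := by
  simp only [cyc_eq_card_cycleType_add, Perm.cycleType_conj, Perm.card_support_conj]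

/-- The involution `σ ↦ (ξ σ)⁻¹` swaps `cyc σ` and `cyc (ξ σ)`, since `ξ (ξ σ)⁻¹` is conjugate
to `σ⁻¹`. -/
lemma sum_cyc_cyc_mul_left_swap {R : Type*} [AddCommMonoid R] {r : ℕ} (ξ : Perm (Fin r))
    (f : ℕ → ℕ → R) :
    ∑ σ : Perm (Fin r), f (cyc σ) (cyc (ξ * σ)) = ∑ σ : Perm (Fin r), f (cyc (ξ * σ)) (cyc σ) := by
  refine Fintype.sum_equiv ((Equiv.mulLeft ξ).trans (Equiv.inv _)) _ _ fun σ => ?_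
  have hconj : ξ * (ξ * σ)⁻¹ = ξ * σ⁻¹ * ξ⁻¹ := by group
  simp only [Equiv.trans_apply, Equiv.inv_apply, Equiv.coe_mulLeft, hconj, cyc_conj, cyc_inv]

theorem one_face_hypermap_gf_symmetric_general (r m n : ℕ) :
    ∑ σ : Equiv.Perm (Fin r), (m : ℤ) ^ cyc σ * (n : ℤ) ^ cyc (finRotate r * σ) =
      ∑ σ : Equiv.Perm (Fin r), (n : ℤ) ^ cyc σ * (m : ℤ) ^ cyc (finRotate r * σ) := by
  simpa only [mul_comm] using
    sum_cyc_cyc_mul_left_swap (finRotate r) fun a b => (m : ℤ) ^ a * (n : ℤ) ^ b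

/-- Symmetry of the one-face rooted hypermap generating function:
∑_{σ ∈ Sym_r} m^{cyc σ} n^{cyc (ξ_r σ)} = ∑_{σ ∈ Sym_r} n^{cyc σ} m^{cyc (ξ_r σ)}. -/
theorem one_face_hypermap_gf_symmetric (r m n : ℕ) (hr : 1 ≤ r) (hm : 1 ≤ m) (hn : 1 ≤ n) :
    ∑ σ : Equiv.Perm (Fin r), (m : ℤ) ^ cyc σ * (n : ℤ) ^ cyc (finRotate r * σ) =
      ∑ σ : Equiv.Perm (Fin r), (n : ℤ) ^ cyc σ * (m : ℤ) ^ cyc (finRotate r * σ) :=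
  one_face_hypermap_gf_symmetric_general r m n
end

section
/- For every integer r ≥ 1 and every permutation σ of {1,…,r}, cyc(σ) + cyc(ξ_r σ) ≤ r + 1, with equality attained (e.g. at σ the identity); hence the polynomial P_r(m,m) = ∑_{σ ∈ Sym_r} m^{cyc(σ)+cyc(ξ_r σ)} has degree exactly r + 1. -/
/-!
The σ-invariant functions `α → K` are the functions constant on the orbits of σ, so they form
a space of dimension cyc σ. A function invariant under both σ and τ is invariant under στ, so
the dimension formula `dim (U ⊔ V) + dim (U ⊓ V) = dim U + dim V` with `dim (U ⊔ V) ≤ |α|` gives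
`cyc σ + cyc τ ≤ |α| + cyc (στ)`. Applied to `ξ_r σ` and `σ⁻¹`, whose product is the single
cycle `ξ_r`, this is the genus bound.
-/

open Finset Polynomial

namespace Equiv.Perm

section InvariantFunctions

variable {α : Type*} (K : Type*) [Field K]

def invariantFunctions (σ : Perm α) : Submodule K (α → K) where
  carrier := {f | ∀ x, f (σ x) = f x}
  add_mem' hf hg x := by simp [hf x, hg x]
  zero_mem' _ := rfl
  smul_mem' c f hf x := by simp [hf x]

variable {K}

theorem mem_invariantFunctions {σ : Perm α} {f : α → K} :
    f ∈ invariantFunctions K σ ↔ ∀ x, f (σ x) = f x := Iff.rfl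

theorem apply_eq_of_mem_invariantFunctions [Finite α] {σ : Perm α} {f : α → K}
    (hf : f ∈ invariantFunctions K σ) {x y : α} (h : σ.SameCycle x y) : f x = f y := by
  obtain ⟨n, -, rfl⟩ := h.exists_nat_pow_eq
  clear h
  induction n with
  | zero => rfl
  | succ n ih => rw [pow_succ', mul_apply, hf, ih]

variable (K)

theorem invariantFunctions_inv (σ : Perm α) :
    invariantFunctions K σ⁻¹ = invariantFunctions K σ := by
  ext f
  simp only [mem_invariantFunctions]
  exact ⟨fun hf x => by simpa using (hf (σ x)).symm, fun hf x => by simpa using (hf (σ⁻¹ x)).symm⟩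

theorem inf_invariantFunctions_le_mul (σ τ : Perm α) :
    invariantFunctions K σ ⊓ invariantFunctions K τ ≤ invariantFunctions K (σ * τ) :=
  fun _ ⟨hσ, hτ⟩ x => by rw [mul_apply, hσ, hτ]

end InvariantFunctions

variable {α : Type*} [Fintype α] [DecidableEq α]

def numCycles (σ : Perm α) : ℕ :=
  σ.cycleType.card + (Finset.univ.filter fun x => σ x = x).card

theorem _root_.cyc_eq_numCycles {r : ℕ} (σ : Perm (Fin r)) : cyc σ = σ.numCycles := rfl

def orbitLabel (σ : Perm α) (x : α) : σ.cycleFactorsFinset ⊕ {x // σ x = x} :=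
  if h : σ x = x then .inr ⟨x, h⟩
  else .inl ⟨σ.cycleOf x, cycleOf_mem_cycleFactorsFinset_iff.mpr (mem_support.mpr h)⟩

theorem orbitLabel_eq_iff {σ : Perm α} {x y : α} :
    σ.orbitLabel x = σ.orbitLabel y ↔ σ.SameCycle x y := by
  unfold orbitLabel
  by_cases hx : σ x = x <;> by_cases hy : σ y = y <;>
    simp only [hx, hy, dif_pos, dif_neg, not_false_eq_true]
  · simpa using ⟨fun h => h ▸ SameCycle.refl σ x, fun h => h.eq_of_left hx⟩
  · simpa using fun h => hy (h.apply_eq_self_iff.mp hx)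
  · simpa using fun h => hx (h.apply_eq_self_iff.mpr hy)
  · simpa [Subtype.ext_iff] using
      (sameCycle_iff_cycleOf_eq_of_mem_support (mem_support.mpr hx) (mem_support.mpr hy)).symm

theorem orbitLabel_surjective (σ : Perm α) : Function.Surjective σ.orbitLabel := by
  rintro (⟨c, hc⟩ | ⟨x, hx⟩)
  · obtain ⟨a, ha⟩ := (mem_cycleFactorsFinset_iff.mp hc).1.nonempty_support
    have hσa : σ a ≠ a := mem_support.mp (mem_cycleFactorsFinset_support_le hc ha)
    exact ⟨a, by simp [orbitLabel, hσa, cycle_is_cycleOf ha hc]⟩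
  · exact ⟨x, by simp [orbitLabel, hx]⟩

theorem numCycles_eq_card_sum (σ : Perm α) :
    σ.numCycles = Fintype.card (σ.cycleFactorsFinset ⊕ {x // σ x = x}) := by
  rw [Fintype.card_sum, Fintype.card_coe, Fintype.card_subtype, numCycles, cycleType_def,
    Multiset.card_map]
  rfl

section Dimension

variable (K : Type*) [Field K]

theorem range_funLeft_orbitLabel (σ : Perm α) :
    LinearMap.range (LinearMap.funLeft K K σ.orbitLabel) = invariantFunctions K σ := by
  ext f
  constructor
  · rintro ⟨g, rfl⟩ x
    exact congrArg g (orbitLabel_eq_iff.mpr (sameCycle_apply_left.mpr (SameCycle.refl σ x)))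
  · intro hf
    refine ⟨f ∘ Function.surjInv σ.orbitLabel_surjective, funext fun x => ?_⟩
    exact apply_eq_of_mem_invariantFunctions hf
      (orbitLabel_eq_iff.mp (Function.surjInv_eq σ.orbitLabel_surjective _))

theorem finrank_invariantFunctions (σ : Perm α) :
    Module.finrank K (invariantFunctions K σ) = σ.numCycles := by
  have hinj := LinearMap.funLeft_injective_of_surjective K K _ σ.orbitLabel_surjective
  rw [← range_funLeft_orbitLabel, ← (LinearEquiv.ofInjective _ hinj).finrank_eq,
    Module.finrank_fintype_fun_eq_card, numCycles_eq_card_sum]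

end Dimension

theorem numCycles_inv (σ : Perm α) : σ⁻¹.numCycles = σ.numCycles := by
  rw [← finrank_invariantFunctions ℚ, ← finrank_invariantFunctions ℚ, invariantFunctions_inv]

theorem numCycles_add_numCycles_le (σ τ : Perm α) :
    σ.numCycles + τ.numCycles ≤ Fintype.card α + (σ * τ).numCycles := by
  simp only [← finrank_invariantFunctions ℚ]
  rw [← Submodule.finrank_sup_add_finrank_inf_eq]
  gcongr
  · simpa using Submodule.finrank_le (invariantFunctions ℚ σ ⊔ invariantFunctions ℚ τ)
  · exact Submodule.finrank_mono (inf_invariantFunctions_le_mul ℚ σ τ)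

theorem numCycles_one : (1 : Perm α).numCycles = Fintype.card α := by
  simp [numCycles]

theorem numCycles_finRotate_succ (n : ℕ) : (finRotate (n + 1)).numCycles = 1 := by
  rcases n with _ | n
  · simp [Subsingleton.elim (finRotate 1) 1, numCycles]
  · simp [numCycles, cycleType_finRotate]

end Equiv.Perm

theorem Polynomial.natDegree_sum_X_pow_eq {R ι : Type*} [Semiring R] [CharZero R]
    (s : Finset ι) (e : ι → ℕ) (N : ℕ) (hle : ∀ i ∈ s, e i ≤ N) (hex : ∃ i ∈ s, e i = N) :
    (∑ i ∈ s, (X : R[X]) ^ e i).natDegree = N := by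
  refine le_antisymm (natDegree_sum_le_of_forall_le _ _ fun i hi => ?_)
    (le_natDegree_of_ne_zero ?_)
  · exact (natDegree_X_pow_le _).trans (hle i hi)
  · obtain ⟨i, hi, hiN⟩ := hex
    simp only [finsetSum_coeff, coeff_X_pow, sum_boole, ne_eq, Nat.cast_eq_zero,
      card_eq_zero, filter_eq_empty_iff, not_forall, not_not]
    exact ⟨i, hi, hiN.symm⟩

open Equiv Perm

/-- cyc(σ) + cyc(ξ_r σ) ≤ r + 1 for every σ ∈ Sym_r, with equality at σ = 1; hence the
polynomial P_r(m,m) = ∑_σ m^{cyc σ + cyc(ξ_r σ)} has degree exactly r + 1. -/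
theorem one_face_hypermap_genus_bound (r : ℕ) (hr : 1 ≤ r) :
    (∀ σ : Equiv.Perm (Fin r), cyc σ + cyc (finRotate r * σ) ≤ r + 1) ∧
    cyc (1 : Equiv.Perm (Fin r)) + cyc (finRotate r * 1) = r + 1 ∧
    (∑ σ : Equiv.Perm (Fin r),
        (Polynomial.X : Polynomial ℤ) ^ (cyc σ + cyc (finRotate r * σ))).natDegree = r + 1 := by
  obtain ⟨n, rfl⟩ := Nat.exists_eq_add_of_le' hr
  simp only [cyc_eq_numCycles]
  have hrot : (finRotate (n + 1)).numCycles = 1 := numCycles_finRotate_succ n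
  have hbound (σ : Perm (Fin (n + 1))) :
      σ.numCycles + (finRotate (n + 1) * σ).numCycles ≤ n + 1 + 1 := by
    have h := numCycles_add_numCycles_le (finRotate (n + 1) * σ) σ⁻¹
    rw [mul_inv_cancel_right, numCycles_inv, Fintype.card_fin, hrot] at h
    omega
  have hone : numCycles (1 : Perm (Fin (n + 1))) + (finRotate (n + 1) * 1).numCycles
      = n + 1 + 1 := by
    rw [mul_one, hrot, numCycles_one, Fintype.card_fin]
  exact ⟨hbound, hone, natDegree_sum_X_pow_eq _ _ _ (fun σ _ => hbound σ) ⟨1, mem_univ _, hone⟩⟩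
end
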